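/- Let n ≥ 1 be a natural number and m an integer. Let g : ℝ → ℝ be a continuous bijective degree-one lift such that g^[n](x) = x + m for all x ∈ ℝ, and let s : ℝ → ℝ be a continuous strictly decreasing function with s(x+1) = s(x) − 1 for all x, s(s(x)) = x for all x, and s(g(x)) = g⁻¹(s(x)) for all x, where g⁻¹ is the inverse function of g. Define h : ℝ → ℝ by h(x) = (1/(2n))·∑_{i=0}^{n−1} (g^[i](x) − g^[i](s(x))). Then h is continuous, strictly increasing, satisfies h(x+1) = h(x) + 1 for all x, satisfies h(g(x)) = h(x) + m/n for all x, and satisfies h(s(x)) = −h(x) for all x. -/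

import Mathlib

/-!
Write `S x = ∑_{i<n} g^[i] x`, so that `h x = (S x - S (s x)) / (2n)`. Since `g^[n] = (· + m)`,
shifting the orbit segment by one step of `g` changes `S` by exactly `m`: `S (g x) = S x + m`, and
likewise `S (g⁻¹ y) = S y - m`. The relation `s ∘ g = g⁻¹ ∘ s` therefore turns `h ∘ g` into
`h + 2m / (2n)`. The other properties are immediate: `S` is strictly increasing (its `i = 0` term is
the identity), `S (x + 1) = S x + n`, and `s` is an involution.
-/

open Finset Function

theorem sum_range_iterate_apply_map {α : Type*} [AddCommGroup α] (f : α → α) (n : ℕ) (x : α) :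
    ∑ i ∈ range n, f^[i] (f x) = ∑ i ∈ range n, f^[i] x + (f^[n] x - x) := by
  have h := sum_range_succ' (fun i => f^[i] x) n
  rw [sum_range_succ] at h
  simp only [iterate_succ_apply, iterate_zero_apply] at h
  rw [add_sub, eq_sub_iff_add_eq]
  exact h.symm

theorem strictMono_sum_range_iterate {α : Type*} [AddCommMonoid α] [PartialOrder α]
    [IsOrderedCancelAddMonoid α] {f : α → α} (hf : Monotone f) {n : ℕ} (hn : 0 < n) :
    StrictMono fun x => ∑ i ∈ range n, f^[i] x := fun _ _ hxy =>
  sum_lt_sum (fun i _ => hf.iterate i hxy.le) ⟨0, mem_range.2 hn, hxy⟩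

theorem sum_range_iterate_add_one {α : Type*} [AddCommMonoidWithOne α] {f : α → α}
    (hf : ∀ x, f (x + 1) = f x + 1) (n : ℕ) (x : α) :
    ∑ i ∈ range n, f^[i] (x + 1) = ∑ i ∈ range n, f^[i] x + n := by
  have hfi (i : ℕ) : f^[i] (x + 1) = f^[i] x + 1 := Commute.iterate_left (g := (· + 1)) hf i x
  simp [hfi, sum_add_distrib]

theorem stmt_3 (n : ℕ) (hn : 1 ≤ n) (m : ℤ) (g : ℝ → ℝ)
    (hgc : Continuous g) (hgbij : Function.Bijective g) (hgm : Monotone g)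
    (hgdeg : ∀ x : ℝ, g (x + 1) = g x + 1)
    (hgper : ∀ x : ℝ, g^[n] x = x + m)
    (s : ℝ → ℝ) (hsc : Continuous s) (hsanti : StrictAnti s)
    (hsdeg : ∀ x : ℝ, s (x + 1) = s x - 1)
    (hsinv : ∀ x : ℝ, s (s x) = x)
    (hsg : ∀ x : ℝ, s (g x) = Function.invFun g (s x)) :
    ∀ h : ℝ → ℝ,
      (h = fun x => (1 / (2 * n : ℝ)) * ∑ i ∈ Finset.range n, (g^[i] x - g^[i] (s x))) →
      Continuous h ∧ StrictMono h ∧ (∀ x : ℝ, h (x + 1) = h x + 1) ∧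
        (∀ x : ℝ, h (g x) = h x + (m : ℝ) / n) ∧
        ∀ x : ℝ, h (s x) = -h x := by
  rintro h rfl
  obtain ⟨S, hS⟩ : ∃ S : ℝ → ℝ, ∀ x, S x = ∑ i ∈ range n, g^[i] x := ⟨_, fun _ => rfl⟩
  have hsplit (x : ℝ) : ∑ i ∈ range n, (g^[i] x - g^[i] (s x)) = S x - S (s x) := by
    rw [sum_sub_distrib, hS, hS]
  simp only [hsplit]
  have hn0 : (0 : ℝ) < n := by exact_mod_cast hn
  have hSg (x : ℝ) : S (g x) = S x + m := by
    rw [hS, hS, sum_range_iterate_apply_map, hgper, add_sub_cancel_left]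
  have hSinv (y : ℝ) : S (invFun g y) = S y - m := by
    rw [eq_sub_iff_add_eq, ← hSg, rightInverse_invFun hgbij.surjective]
  have hS1 (x : ℝ) : S (x + 1) = S x + n := by
    rw [hS, hS, sum_range_iterate_add_one hgdeg]
  have hSmono : StrictMono S := by
    rw [funext hS]
    exact strictMono_sum_range_iterate hgm hn
  have hScont : Continuous S := by
    rw [funext hS]
    exact continuous_finsetSum _ fun i _ => hgc.iterate i
  refine ⟨by fun_prop, fun x y hxy => ?_, fun x => ?_, fun x => ?_, fun x => ?_⟩
  · have hlt := hSmono hxy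
    have hlt_s := hSmono (hsanti hxy)
    dsimp only
    gcongr ?_ * ?_
    linarith
  · have hS1' : S (s x - 1) = S (s x) - n := by rw [eq_sub_iff_add_eq, ← hS1, sub_add_cancel]
    rw [hS1, hsdeg, hS1']
    field_simp
    ring
  · rw [hsg, hSg, hSinv]
    field_simp
    ring
  · rw [hsinv]
    ring
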